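/- arXiv:2302.06822 — 6 statements merged into one kernel-verified Lean document; each statement's English description precedes it below -/
import Mathlib

section
/- Let r ≥ 2 be an integer and define f(ξ) = (1+ξ)^(1/r) + (1-ξ)^(1/r - 1) - ξ - 2 for ξ ∈ [0, 1/2]. Then f(ξ) > 0 for all ξ ∈ (0, 1/2]. -/
/-!
Write `b = 1 - 1/r ∈ [1/2, 1)`. Bernoulli's inequality `(1 + x)^b ≤ 1 + b x` bounds both powers
from below by rational functions: `(1 + ξ)^(1/r) ≥ (1 + ξ)/(1 + bξ)` and
`(1 - ξ)^(1/r - 1) ≥ 1/(1 - bξ)`. The sum of these rational functions exceeds `ξ + 2` by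
`b ξ² (2b - 1 + bξ) / ((1 + bξ)(1 - bξ))`, which is positive because `b ≥ 1/2`.
-/

open Real

lemma div_one_add_mul_le_rpow {x a : ℝ} (hx : -1 < x) (ha₀ : 0 ≤ a) (ha₁ : a ≤ 1) :
    (1 + x) / (1 + (1 - a) * x) ≤ (1 + x) ^ a := by
  have hpos : 0 < 1 + x := by linarith
  have hbernoulli : (1 + x) ^ (1 - a) ≤ 1 + (1 - a) * x :=
    rpow_one_add_le_one_add_mul_self hx.le (by linarith) (by linarith)
  have hsplit : (1 + x) ^ a * (1 + x) ^ (1 - a) = 1 + x := by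
    rw [← rpow_add hpos, add_sub_cancel, rpow_one]
  have hden : 0 < 1 + (1 - a) * x := (rpow_pos_of_pos hpos _).trans_le hbernoulli
  rw [div_le_iff₀ hden]
  calc 1 + x = (1 + x) ^ a * (1 + x) ^ (1 - a) := hsplit.symm
    _ ≤ (1 + x) ^ a * (1 + (1 - a) * x) := by gcongr

lemma add_two_lt_div_add_inv {b ξ : ℝ} (hb₀ : 1 / 2 ≤ b) (hb₁ : b ≤ 1) (hξ₀ : 0 < ξ)
    (hξ₁ : ξ < 1) :
    ξ + 2 < (1 + ξ) / (1 + b * ξ) + 1 / (1 - b * ξ) := by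
  have hd₁ : 0 < 1 + b * ξ := by positivity
  have hd₂ : 0 < 1 - b * ξ := by nlinarith
  have hdiff : (1 + ξ) / (1 + b * ξ) + 1 / (1 - b * ξ) - (ξ + 2)
      = b * ξ ^ 2 * (2 * b - 1 + b * ξ) / ((1 + b * ξ) * (1 - b * ξ)) := by
    rw [div_add_div _ _ hd₁.ne' hd₂.ne', eq_div_iff (mul_pos hd₁ hd₂).ne', sub_mul,
      div_mul_cancel₀ _ (mul_pos hd₁ hd₂).ne']
    ring
  have hnum : 0 < b * ξ ^ 2 * (2 * b - 1 + b * ξ) := by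
    have : 0 < b * ξ := by positivity
    have : 0 < 2 * b - 1 + b * ξ := by linarith
    positivity
  have := div_pos hnum (mul_pos hd₁ hd₂)
  linarith

lemma add_two_lt_rpow_add_rpow_sub_one {a ξ : ℝ} (ha₀ : 0 ≤ a) (ha₁ : a ≤ 1 / 2) (hξ₀ : 0 < ξ)
    (hξ₁ : ξ < 1) :
    ξ + 2 < (1 + ξ) ^ a + (1 - ξ) ^ (a - 1) := by
  have hpos : 0 < 1 - ξ := by linarith
  have hplus := div_one_add_mul_le_rpow (x := ξ) (by linarith) ha₀ (by linarith)
  have hminus : 1 / (1 - (1 - a) * ξ) ≤ (1 - ξ) ^ (a - 1) := by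
    have h : (1 - ξ) / (1 - (1 - a) * ξ) ≤ (1 - ξ) ^ a := by
      simpa only [mul_neg, ← sub_eq_add_neg] using
        div_one_add_mul_le_rpow (x := -ξ) (by linarith) ha₀ (by linarith)
    rw [rpow_sub_one hpos.ne', le_div_iff₀ hpos, one_div_mul_eq_div]
    exact h
  have := add_two_lt_div_add_inv (b := 1 - a) (by linarith) (by linarith) hξ₀ hξ₁
  linarith

theorem stmt_0 (r : ℕ) (hr : 2 ≤ r)
    (f : ℝ → ℝ)
    (hf : ∀ ξ : ℝ, f ξ = (1 + ξ) ^ ((1 : ℝ) / r) + (1 - ξ) ^ ((1 : ℝ) / r - 1) - ξ - 2) :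
    ∀ ξ : ℝ, 0 < ξ → ξ ≤ 1 / 2 → 0 < f ξ := by
  intro ξ hξ₀ hξ₁
  have hr' : (2 : ℝ) ≤ r := by exact_mod_cast hr
  have ha₁ : (1 : ℝ) / r ≤ 1 / 2 := one_div_le_one_div_of_le two_pos hr'
  have := add_two_lt_rpow_add_rpow_sub_one (by positivity) ha₁ hξ₀ (by linarith)
  rw [hf]
  linarith
end

section
/- Let r ≥ 2 and n_i ≥ 3 be integers with n_i - 1 ≥ n_j + 1 for a positive integer n_j, and let x_j > 0 be real. Then ((n_i - 1)^(1 - 1/r) · n_i^(1/r) - n_i) · (n_j/(n_i - 1)) · x_j + ((n_j + 1)^(1 - 1/r) · n_j^(1/r) - n_j) · x_j > 0. -/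
lemma key_rpow (s a : ℝ) (hs0 : 0 < s) (hs1 : s < 1) (ha : 1 ≤ a) :
    a * (a + 1) / (a + s) ≤ (a + 1) ^ (1 - s) * a ^ s := by
  have ha0 : (0:ℝ) < a := lt_of_lt_of_le one_pos ha
  have has : 0 < a + s := by linarith
  have hap : (0:ℝ) < a + 1 := by linarith
  have hrs : (0:ℝ) < a ^ s := Real.rpow_pos_of_pos ha0 s
  have hrs1 : (0:ℝ) < (a + 1) ^ s := Real.rpow_pos_of_pos hap s
  -- Bernoulli: (1 + 1/a)^s ≤ 1 + s * (1/a)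
  have hber : (1 + 1/a) ^ s ≤ 1 + s * (1/a) := by
    have h1a : (0:ℝ) ≤ 1/a := by positivity
    have := rpow_one_add_le_one_add_mul_self (s := 1/a)
      (by linarith) hs0.le hs1.le
    linarith [this]
  have h1 : (a + 1) ^ s ≤ a ^ s * ((a + s) / a) := by
    have hfac : a + 1 = a * (1 + 1/a) := by field_simp
    rw [hfac, Real.mul_rpow ha0.le (by positivity)]
    have : (1:ℝ) + s * (1/a) = (a + s)/a := by field_simp
    rw [← this]
    exact mul_le_mul_of_nonneg_left hber hrs.le
  have h2 : a * (a + 1) / (a + s) = (a + 1) * a ^ s / (a ^ s * ((a + s) / a)) := by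
    field_simp
  rw [h2]
  have h3 : (a + 1) * a ^ s / (a ^ s * ((a + s) / a)) ≤ (a + 1) * a ^ s / ((a + 1) ^ s) := by
    apply div_le_div_of_nonneg_left (by positivity) hrs1 h1
  refine h3.trans_eq ?_
  rw [Real.rpow_sub hap, Real.rpow_one]
  ring

theorem stmt_3 (r ni nj : ℕ) (hr : 2 ≤ r) (hni : 3 ≤ ni) (hnj : 1 ≤ nj)
    (hij : ni - 1 ≥ nj + 1) (xj : ℝ) (hx : 0 < xj) :
    0 < (((ni : ℝ) - 1) ^ (1 - (1 : ℝ) / r) * (ni : ℝ) ^ ((1 : ℝ) / r) - ni)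
          * ((nj : ℝ) / ((ni : ℝ) - 1)) * xj
        + (((nj : ℝ) + 1) ^ (1 - (1 : ℝ) / r) * (nj : ℝ) ^ ((1 : ℝ) / r) - nj) * xj := by
  set s : ℝ := (1 : ℝ) / r with hs_def
  have hr2 : (2:ℝ) ≤ (r:ℝ) := by exact_mod_cast hr
  have hs0 : 0 < s := by positivity
  have hshalf : s ≤ 1/2 := by
    rw [hs_def, div_le_div_iff₀ (by linarith) (by norm_num)]
    linarith
  have hs1 : s < 1 := by linarith
  set N : ℝ := (nj : ℝ) with hN_def
  set M : ℝ := (ni : ℝ) - 1 with hM_def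
  have hN1 : (1:ℝ) ≤ N := by rw [hN_def]; exact_mod_cast hnj
  have hMN : N + 1 ≤ M := by
    have h3 : (1:ℕ) ≤ ni := by omega
    have : (nj:ℝ) + 1 ≤ (ni:ℝ) - 1 := by
      have := hij
      have hcast : ((ni - 1 : ℕ) : ℝ) = (ni:ℝ) - 1 := by
        rw [Nat.cast_sub h3]; norm_num
      have : ((nj + 1 : ℕ) : ℝ) ≤ ((ni - 1 : ℕ) : ℝ) := by exact_mod_cast hij
      rw [hcast] at this
      push_cast at this
      linarith
    rw [hN_def, hM_def]; linarith
  have hM2 : (2:ℝ) ≤ M := by linarith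
  have hni_eq : (ni : ℝ) = M + 1 := by rw [hM_def]; ring
  -- lower bound for the nj term
  have hB : N * (N + 1) / (N + s) ≤ (N + 1) ^ (1 - s) * N ^ s :=
    key_rpow s N hs0 hs1 hN1
  -- lower bound for the ni product: M^(1-s) * (M+1)^s ≥ M*(M+1)/(M+1-s)
  have hA : M * (M + 1) / (M + (1 - s)) ≤ M ^ (1 - s) * (M + 1) ^ s := by
    have := key_rpow (1 - s) M (by linarith) (by linarith) (by linarith)
    have he : (1:ℝ) - (1 - s) = s := by ring
    rw [he] at this
    linarith [this]
  -- rewrite goal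
  rw [hni_eq]
  set X : ℝ := M ^ (1 - s) * (M + 1) ^ s with hX_def
  set Y : ℝ := (N + 1) ^ (1 - s) * N ^ s with hY_def
  have hMpos : (0:ℝ) < M := by linarith
  have hNpos : (0:ℝ) < N := by linarith
  have hd1 : (0:ℝ) < N + s := by linarith
  have hd2 : (0:ℝ) < M + (1 - s) := by linarith
  -- key polynomial inequality: M*(M+1-s) > (M+1)*(N+s)
  have hpoly : (M + 1) * (N + s) < M * (M + (1 - s)) := by nlinarith
  -- deficit of ni term
  have hAdef : (M + 1) - X ≤ (M + 1) * (1 - s) / (M + (1 - s)) := by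
    have : (M + 1) - M * (M + 1) / (M + (1 - s)) = (M + 1) * (1 - s) / (M + (1 - s)) := by
      field_simp; ring
    linarith [hA, this.ge, this.le]
  have hBgain : N * (1 - s) / (N + s) ≤ Y - N := by
    have : N * (N + 1) / (N + s) - N = N * (1 - s) / (N + s) := by
      field_simp; ring
    linarith [hB]
  -- compare: (M+1)*(1-s)/(M+1-s) * (N/M) < N*(1-s)/(N+s)
  have hcomp : (M + 1) * (1 - s) / (M + (1 - s)) * (N / M) < N * (1 - s) / (N + s) := by
    rw [div_mul_div_comm, div_lt_div_iff₀ (by positivity) hd1]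
    have h1s : (0:ℝ) < 1 - s := by linarith
    nlinarith [mul_pos hNpos h1s, mul_pos (mul_pos hNpos h1s) (sub_pos.mpr hpoly)]
  have hNM : (0:ℝ) < N / M := by positivity
  have hterm1 : -((M + 1) * (1 - s) / (M + (1 - s)) * (N / M))
      ≤ (X - (M + 1)) * (N / M) := by
    have := mul_le_mul_of_nonneg_right hAdef hNM.le
    linarith [this]
  have hsum : 0 < (X - (M + 1)) * (N / M) + (Y - N) := by
    linarith [hterm1, hBgain, hcomp]
  have hgoal : (X - (M + 1)) * (N / M) * xj + (Y - N) * xj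
      = ((X - (M + 1)) * (N / M) + (Y - N)) * xj := by ring
  rw [hgoal]
  exact mul_pos hsum hx
end

section
/- Let β ≥ 1 be a real number and let l ≥ 3 and θ ≥ l be integers. For a vector b = (b_1, ..., b_l) of positive integers with b_1 + ... + b_l = θ, define R(b) = b_1^β · (b_2^β + b_3^β + ... + b_l^β). If b minimizes R over all such vectors, then b_1 = 1. -/
theorem stmt_5 (β : ℝ) (hβ : 1 ≤ β) (l θ : ℕ) (hl : 3 ≤ l) (hθ : l ≤ θ)
    (i0 : Fin l) (hi0 : (i0 : ℕ) = 0)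
    (b : Fin l → ℕ) (hbpos : ∀ i, 0 < b i) (hbsum : ∑ i, b i = θ)
    (hmin : ∀ c : Fin l → ℕ, (∀ i, 0 < c i) → (∑ i, c i = θ) →
      ((b i0 : ℝ)) ^ β * ∑ i ∈ Finset.univ.erase i0, ((b i : ℝ)) ^ β ≤
        ((c i0 : ℝ)) ^ β * ∑ i ∈ Finset.univ.erase i0, ((c i : ℝ)) ^ β) :
    b i0 = 1 := by
  by_contra hne
  have hb2 : 2 ≤ b i0 := by have := hbpos i0; omega
  set i1 : Fin l := ⟨1, by omega⟩ with hi1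
  set i2 : Fin l := ⟨2, by omega⟩ with hi2
  have h01 : i1 ≠ i0 := by
    intro h; apply_fun Fin.val at h; simp [hi1, hi0] at h
  have h02 : i2 ≠ i0 := by
    intro h; apply_fun Fin.val at h; simp [hi2, hi0] at h
  have h12 : i2 ≠ i1 := by
    intro h; apply_fun Fin.val at h; simp [hi1, hi2] at h
  set v : ℕ := b i1 + (b i0 - 1) with hv
  set c : Fin l → ℕ := Function.update (Function.update b i1 v) i0 1 with hc
  have hci0 : c i0 = 1 := by simp [hc]
  have hci1 : c i1 = v := by
    simp [hc, Function.update_apply, h01]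
  have hcother : ∀ i, i ≠ i0 → i ≠ i1 → c i = b i := by
    intro i hi hi'
    simp [hc, Function.update_apply, hi, hi']
  have hmem1 : i1 ∈ Finset.univ.erase i0 := by
    simp [Finset.mem_erase, h01]
  have hmem2 : i2 ∈ (Finset.univ.erase i0).erase i1 := by
    simp [Finset.mem_erase, h02, h12]
  -- sums decompose
  have hsum_b : ∑ i, b i = b i0 + (b i1 + ∑ i ∈ (Finset.univ.erase i0).erase i1, b i) := by
    rw [← Finset.add_sum_erase _ b (Finset.mem_univ i0), ← Finset.add_sum_erase _ b hmem1]
  have hcpos : ∀ i, 0 < c i := by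
    intro i
    by_cases hA : i = i0
    · simp [hA, hci0]
    · by_cases hB : i = i1
      · rw [hB, hci1]; have := hbpos i1; omega
      · rw [hcother i hA hB]; exact hbpos i
  have hcrest : ∑ i ∈ (Finset.univ.erase i0).erase i1, c i
      = ∑ i ∈ (Finset.univ.erase i0).erase i1, b i :=
    Finset.sum_congr rfl (fun i hi => by
      rw [hcother i (Finset.mem_erase.mp (Finset.mem_erase.mp hi).2).1
        (Finset.mem_erase.mp hi).1])
  have hcsum : ∑ i, c i = θ := by
    have hdec : ∑ i, c i = c i0 + (c i1 + ∑ i ∈ (Finset.univ.erase i0).erase i1, c i) := by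
      rw [← Finset.add_sum_erase _ c (Finset.mem_univ i0), ← Finset.add_sum_erase _ c hmem1]
    rw [hdec, hci0, hci1, hcrest, hv]
    rw [hsum_b] at hbsum
    omega
  have key := hmin c hcpos hcsum
  set Srest : ℝ := ∑ i ∈ (Finset.univ.erase i0).erase i1, ((b i : ℝ)) ^ β with hSrest
  have hsb : ∑ i ∈ Finset.univ.erase i0, ((b i : ℝ)) ^ β = ((b i1 : ℝ)) ^ β + Srest := by
    rw [hSrest, ← Finset.add_sum_erase _ _ hmem1]
  have hsc : ∑ i ∈ Finset.univ.erase i0, ((c i : ℝ)) ^ β = ((v : ℝ)) ^ β + Srest := by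
    rw [hSrest, ← Finset.add_sum_erase _ _ hmem1, hci1]
    congr 1
    refine Finset.sum_congr rfl (fun i hi => ?_)
    rw [hcother i (Finset.mem_erase.mp (Finset.mem_erase.mp hi).2).1
      (Finset.mem_erase.mp hi).1]
  rw [hsb, hsc, hci0] at key
  -- real facts
  have hβ0 : (0:ℝ) ≤ β := le_trans zero_le_one hβ
  have hA2 : (2:ℝ) ≤ ((b i0 : ℝ)) ^ β := by
    have h1 : (2:ℝ) ≤ (b i0 : ℝ) := by exact_mod_cast hb2
    calc (2:ℝ) ≤ (b i0 : ℝ) := h1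
    _ = ((b i0 : ℝ)) ^ (1:ℝ) := (Real.rpow_one _).symm
    _ ≤ ((b i0 : ℝ)) ^ β := Real.rpow_le_rpow_of_exponent_le (by linarith) hβ
  have hB0 : (0:ℝ) ≤ ((b i1 : ℝ)) ^ β := Real.rpow_nonneg (by positivity) _
  have hT : ((v : ℝ)) ^ β ≤ ((b i0 : ℝ)) ^ β * ((b i1 : ℝ)) ^ β := by
    have hnat : v ≤ b i0 * b i1 := by
      obtain ⟨k, hk⟩ := Nat.exists_eq_add_of_le hb2
      obtain ⟨m, hm⟩ := Nat.exists_eq_add_of_le (hbpos i1)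
      rw [hv, hk, hm]
      have h2 : 2 + k - 1 = 1 + k := by omega
      rw [h2]
      nlinarith [Nat.zero_le (k * m)]
    have hcast : ((v : ℝ)) ≤ ((b i0 * b i1 : ℕ) : ℝ) := by exact_mod_cast hnat
    calc ((v:ℝ)) ^ β ≤ (((b i0 * b i1 : ℕ):ℝ)) ^ β :=
          Real.rpow_le_rpow (by positivity) hcast hβ0
      _ = ((b i0 : ℝ)) ^ β * ((b i1 : ℝ)) ^ β := by
          rw [Nat.cast_mul, Real.mul_rpow (by positivity) (by positivity)]
  have hS1 : (1:ℝ) ≤ Srest := by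
    have h1 : (1:ℝ) ≤ ((b i2 : ℝ)) ^ β :=
      Real.one_le_rpow (by exact_mod_cast hbpos i2) hβ0
    calc (1:ℝ) ≤ ((b i2 : ℝ)) ^ β := h1
      _ ≤ Srest := Finset.single_le_sum (f := fun i => ((b i : ℝ)) ^ β)
          (fun i _ => Real.rpow_nonneg (Nat.cast_nonneg _) _) hmem2
  rw [Nat.cast_one, Real.one_rpow, one_mul] at key
  nlinarith [key, hT, hS1, hA2, hB0]
end

section
/- Let β > 1 be real, q ≥ 2 an integer, and a_1, a_2 integers with 1 ≤ a_1 ≤ a_2 - 1 (so a_1 < a_2). Then a_2^(β(q-1)) · ((a_2+1)^β - a_2^β) > a_1^(β(q-1)) · (a_1^β - (a_1-1)^β). -/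
open Real Set

theorem stmt_8 (β : ℝ) (hβ : 1 < β) (q : ℕ) (hq : 2 ≤ q)
    (a1 a2 : ℕ) (ha1 : 1 ≤ a1) (ha12 : a1 ≤ a2 - 1) (ha2 : 1 ≤ a2) :
    (a2 : ℝ) ^ (β * (q - 1)) * (((a2 : ℝ) + 1) ^ β - (a2 : ℝ) ^ β) >
      (a1 : ℝ) ^ (β * (q - 1)) * ((a1 : ℝ) ^ β - ((a1 : ℝ) - 1) ^ β) := by
  have hlt : a1 < a2 := by omega
  have hA1 : (1 : ℝ) ≤ (a1 : ℝ) := by exact_mod_cast ha1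
  have hA : (a1 : ℝ) < a2 := by exact_mod_cast hlt
  have hf := strictConvexOn_rpow hβ
  -- slope comparison: f(a1) - f(a1-1) < f(a2+1) - f(a2)
  have h0 : (0 : ℝ) ≤ (a1 : ℝ) - 1 := by linarith
  have s1 : (((a1:ℝ)) ^ β - ((a1:ℝ) - 1) ^ β) / ((a1:ℝ) - ((a1:ℝ) - 1))
      < (((a2:ℝ)) ^ β - ((a1:ℝ)) ^ β) / ((a2:ℝ) - (a1:ℝ)) :=
    hf.slope_strict_mono_adjacent (mem_Ici.mpr h0) (mem_Ici.mpr (by positivity))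
      (by linarith) hA
  have s2 : (((a2:ℝ)) ^ β - ((a1:ℝ)) ^ β) / ((a2:ℝ) - (a1:ℝ))
      < ((((a2:ℝ)) + 1) ^ β - ((a2:ℝ)) ^ β) / (((a2:ℝ) + 1) - (a2:ℝ)) :=
    hf.slope_strict_mono_adjacent (mem_Ici.mpr (by linarith)) (mem_Ici.mpr (by positivity))
      hA (by linarith)
  have key : (a1:ℝ) ^ β - ((a1:ℝ) - 1) ^ β < ((a2:ℝ) + 1) ^ β - (a2:ℝ) ^ β := by
    have h1 : (a1:ℝ) - ((a1:ℝ) - 1) = 1 := by ring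
    have h2 : ((a2:ℝ) + 1) - (a2:ℝ) = 1 := by ring
    rw [h1, div_one] at s1
    rw [h2, div_one] at s2
    linarith
  -- positivity of RHS second factor
  have hgap : (0:ℝ) < (a1:ℝ) ^ β - ((a1:ℝ) - 1) ^ β := by
    have := Real.rpow_lt_rpow h0 (by linarith : (a1:ℝ) - 1 < a1) (by linarith : (0:ℝ) < β)
    linarith
  have hexp : (0:ℝ) ≤ β * (q - 1) := by
    have : (1:ℝ) ≤ (q:ℝ) := by exact_mod_cast Nat.one_le_of_lt hq
    nlinarith
  have hfac : (a1:ℝ) ^ (β * (q - 1)) ≤ (a2:ℝ) ^ (β * (q - 1)) :=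
    Real.rpow_le_rpow (by linarith) (le_of_lt hA) hexp
  have hfacpos : (0:ℝ) < (a1:ℝ) ^ (β * (q - 1)) :=
    Real.rpow_pos_of_pos (by linarith) _
  calc (a1:ℝ) ^ (β * (q - 1)) * ((a1:ℝ) ^ β - ((a1:ℝ) - 1) ^ β)
      < (a1:ℝ) ^ (β * (q - 1)) * (((a2:ℝ) + 1) ^ β - (a2:ℝ) ^ β) :=
        mul_lt_mul_of_pos_left key hfacpos
    _ ≤ (a2:ℝ) ^ (β * (q - 1)) * (((a2:ℝ) + 1) ^ β - (a2:ℝ) ^ β) :=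
        mul_le_mul_of_nonneg_right hfac (by linarith)
end

section
/- Let β > 1 be real, q ≥ 2 and m ≥ 2 integers, and θ ≥ mq an integer. Define g_q(s) = a^(q-l)(a+1)^l where s = aq + l, a = ⌊s/q⌋, 0 ≤ l ≤ q-1. Over all m-tuples of integers (s_1, ..., s_m) with each s_i ≥ q and s_1 + ... + s_m = θ, the sum f(s) = g_q(s_1)^β + ... + g_q(s_m)^β attains its maximum exactly at tuples that are permutations of (q, q, ..., q, θ - (m-1)q). -/
/-!
From `⌊u/q⌋ g(u+1) = (⌊u/q⌋ + 1) g(u)` one reads off that `g = g_q` is positive, increasing and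
discretely convex on `[q, ∞)`; composing with the strictly convex increasing `x ↦ x^β` makes the
increments of `G = g^β` strictly increasing there. So moving one unit from a part `s_i > q` to a
part `s_j ≥ s_i` strictly increases `∑ G(s_k)`, and a maximiser has at most one part above `q`.
All such tuples have the same value, and a maximiser exists because there are finitely many
tuples, so these tuples are exactly the maximisers.
-/

/-- The balanced product function: `g q s = a^(q-l) * (a+1)^l` where
`a = ⌊s/q⌋` and `l = s % q`. -/
def balancedProd (q s : ℕ) : ℕ := (s / q) ^ (q - s % q) * (s / q + 1) ^ (s % q)

open Finset Function Set

section BalancedProd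

variable {q : ℕ}

lemma balancedProd_mul_add {a l : ℕ} (hl : l < q) :
    balancedProd q (q * a + l) = a ^ (q - l) * (a + 1) ^ l := by
  rw [balancedProd, Nat.mul_add_div (by omega), Nat.div_eq_of_lt hl, add_zero, Nat.mul_add_mod,
    Nat.mod_eq_of_lt hl]

lemma div_mul_balancedProd_succ (hq : 0 < q) (u : ℕ) :
    u / q * balancedProd q (u + 1) = (u / q + 1) * balancedProd q u := by
  obtain ⟨a, l, hl, rfl⟩ : ∃ a l, l < q ∧ u = q * a + l :=
    ⟨u / q, u % q, Nat.mod_lt u hq, (Nat.div_add_mod u q).symm⟩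
  rw [Nat.mul_add_div hq, Nat.div_eq_of_lt hl, add_zero, balancedProd_mul_add hl]
  rcases Nat.lt_or_ge (l + 1) q with hl' | hl'
  · rw [add_assoc, balancedProd_mul_add hl', show q - l = q - (l + 1) + 1 by omega]
    ring
  · obtain rfl : q = l + 1 := by omega
    rw [show (l + 1) * a + l + 1 = (l + 1) * (a + 1) + 0 by ring, balancedProd_mul_add hq,
      Nat.sub_zero, Nat.add_sub_cancel_left]
    ring

lemma balancedProd_pos (hq : 0 < q) {u : ℕ} (hu : q ≤ u) : 0 < balancedProd q u := by
  have ha : 0 < u / q := Nat.div_pos hu hq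
  unfold balancedProd
  positivity

lemma balancedProd_lt_succ (hq : 0 < q) {u : ℕ} (hu : q ≤ u) :
    balancedProd q u < balancedProd q (u + 1) := by
  have ha : 0 < u / q := Nat.div_pos hu hq
  have hmul := div_mul_balancedProd_succ hq u
  have hpos := balancedProd_pos hq hu
  refine Nat.lt_of_mul_lt_mul_left (a := u / q) ?_
  rw [hmul]
  nlinarith

/-- Discrete convexity: with `a = u / q` and `b = (u + 1) / q`, multiplying through by
`(a + 1) * b` reduces the claim to `b ≤ a + 1`. -/
lemma two_mul_balancedProd_succ_le (hq : 0 < q) {u : ℕ} (hu : q ≤ u) :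
    2 * balancedProd q (u + 1) ≤ balancedProd q u + balancedProd q (u + 2) := by
  have ha : 0 < u / q := Nat.div_pos hu hq
  have hab : u / q ≤ (u + 1) / q := Nat.div_le_div_right (Nat.le_succ u)
  have hba : (u + 1) / q ≤ u / q + 1 := by
    rw [Nat.succ_div]
    split_ifs <;> omega
  have h₁ := div_mul_balancedProd_succ hq u
  have h₂ := div_mul_balancedProd_succ hq (u + 1)
  refine Nat.le_of_mul_le_mul_left (c := (u / q + 1) * ((u + 1) / q)) ?_
    (Nat.mul_pos (Nat.succ_pos _) (ha.trans_le hab))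
  nlinarith

end BalancedProd

lemma two_mul_rpow_lt_add_rpow {β c d e : ℝ} (hβ : 1 < β) (hc : 0 ≤ c) (hd : 0 ≤ d)
    (he : 0 ≤ e) (hce : c ≠ e) (hmid : 2 * d ≤ c + e) : 2 * d ^ β < c ^ β + e ^ β := by
  have hconv := (strictConvexOn_rpow hβ).2 (Set.mem_Ici.2 hc) (Set.mem_Ici.2 he) hce
    (by norm_num : (0 : ℝ) < 1 / 2) (by norm_num : (0 : ℝ) < 1 / 2) (by norm_num)
  simp only [smul_eq_mul] at hconv
  have hmono : d ^ β ≤ (1 / 2 * c + 1 / 2 * e) ^ β :=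
    Real.rpow_le_rpow hd (by linarith) (by linarith)
  linarith

lemma strictMonoOn_rpow_balancedProd_succ_sub {β : ℝ} (hβ : 1 < β) {q : ℕ} (hq : 0 < q) :
    StrictMonoOn (fun u ↦ (balancedProd q (u + 1) : ℝ) ^ β - (balancedProd q u : ℝ) ^ β)
      (Ici q) := by
  refine strictMonoOn_of_lt_add_one ordConnected_Ici fun u _ hu _ ↦ ?_
  have h₀ := balancedProd_pos hq hu
  have h₁ := balancedProd_lt_succ hq hu
  have h₂ := balancedProd_lt_succ hq (Nat.le_succ_of_le hu)
  have hconv := two_mul_balancedProd_succ_le hq hu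
  have := two_mul_rpow_lt_add_rpow (c := balancedProd q u) (d := balancedProd q (u + 1))
    (e := balancedProd q (u + 2)) hβ (by positivity) (by positivity) (by positivity)
    (by norm_cast; omega) (by exact_mod_cast hconv)
  linarith

section Transfer

variable {ι M : Type*} [Fintype ι] [DecidableEq ι] [AddCommMonoid M]

lemma sum_comp_update_add {α : Type*} (F : α → M) (g : ι → α) (j : ι) (b : α) :
    ∑ k, F (update g j b k) + F (g j) = ∑ k, F (g k) + F b := by
  have hupd : ∀ k, F (update g j b k) = update (F ∘ g) j (F b) k := fun k ↦ by
    rw [← comp_update]; rfl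
  rw [sum_congr rfl fun k _ ↦ hupd k, sum_update_of_mem (mem_univ j), sdiff_singleton_eq_erase,
    ← add_sum_erase univ _ (mem_univ j)]
  simp only [comp_apply]
  ac_rfl

def transferOne (t : ι → ℕ) (i j : ι) : ι → ℕ :=
  update (update t i (t i - 1)) j (t j + 1)

lemma sum_comp_transferOne_add (F : ℕ → M) (t : ι → ℕ) {i j : ι} (hij : i ≠ j) :
    ∑ k, F (transferOne t i j k) + (F (t i) + F (t j)) =
      ∑ k, F (t k) + (F (t i - 1) + F (t j + 1)) := by
  have h₁ := sum_comp_update_add F t i (t i - 1)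
  have h₂ := sum_comp_update_add F (update t i (t i - 1)) j (t j + 1)
  rw [update_of_ne hij.symm] at h₂
  rw [transferOne, ← add_assoc, add_right_comm, h₂, add_right_comm, h₁, add_assoc]

end Transfer

section Compositions

def compositionsGE (ι : Type*) [Fintype ι] (q θ : ℕ) : Set (ι → ℕ) :=
  {t | (∀ i, q ≤ t i) ∧ ∑ i, t i = θ}

variable {ι : Type*} [Fintype ι] [DecidableEq ι] {q θ : ℕ} {t : ι → ℕ}

lemma compositionsGE_finite : (compositionsGE ι q θ).Finite :=
  (piAntidiag univ θ).finite_toSet.subset fun _ ht ↦ mem_piAntidiag.2 ⟨ht.2, fun i _ ↦ mem_univ i⟩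

lemma transferOne_mem_compositionsGE (ht : t ∈ compositionsGE ι q θ) {i j : ι} (hij : i ≠ j)
    (hi : q < t i) : transferOne t i j ∈ compositionsGE ι q θ := by
  refine ⟨fun k ↦ ?_, ?_⟩
  · have := ht.1 k
    have := ht.1 j
    unfold transferOne
    rw [update_apply, update_apply]
    split_ifs <;> omega
  · have := sum_comp_transferOne_add id t hij
    simp only [id] at this
    have := ht.2
    omega

lemma sum_comp_eq_of_forall_ne_eq {M : Type*} [AddCommMonoid M] (F : ℕ → M) {j : ι} {c : ℕ}
    (h : ∀ i, i ≠ j → t i = c) : ∑ i, F (t i) = F (t j) + (Fintype.card ι - 1) • F c := by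
  rw [← add_sum_erase univ _ (mem_univ j),
    sum_congr rfl fun i hi ↦ by rw [h i (ne_of_mem_erase hi)], sum_const,
    card_erase_of_mem (mem_univ j), card_univ]

lemma eq_sub_of_forall_ne_eq (hsum : ∑ i, t i = θ) {j : ι} {c : ℕ}
    (h : ∀ i, i ≠ j → t i = c) : t j = θ - (Fintype.card ι - 1) * c := by
  have := sum_comp_eq_of_forall_ne_eq id h
  simp only [id, smul_eq_mul] at this
  omega

variable {G : ℕ → ℝ}

lemma sum_lt_sum_transferOne (hG : StrictMonoOn (fun u ↦ G (u + 1) - G u) (Ici q))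
    {i j : ι} (hij : i ≠ j) (hi : q < t i) (hle : t i ≤ t j) :
    ∑ k, G (t k) < ∑ k, G (transferOne t i j k) := by
  have hsum := sum_comp_transferOne_add G t hij
  have hinc := hG (a := t i - 1) (b := t j) (Set.mem_Ici.2 (by omega))
    (Set.mem_Ici.2 (by omega)) (by omega)
  simp only [Nat.sub_add_cancel (hi.trans_le' (Nat.zero_le q))] at hinc
  linarith

/-- Otherwise moving a unit from the smaller to the larger of two parts above `q` would
increase the sum. -/
lemma eq_or_eq_of_isMaxOn (hG : StrictMonoOn (fun u ↦ G (u + 1) - G u) (Ici q))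
    (ht : t ∈ compositionsGE ι q θ)
    (hmax : IsMaxOn (fun t ↦ ∑ i, G (t i)) (compositionsGE ι q θ) t) {i j : ι} (hij : i ≠ j) :
    t i = q ∨ t j = q := by
  by_contra! hne
  have hi : q < t i := (ht.1 i).lt_of_ne' hne.1
  have hj : q < t j := (ht.1 j).lt_of_ne' hne.2
  rcases le_total (t i) (t j) with hle | hle
  · exact (hmax (transferOne_mem_compositionsGE ht hij hi)).not_gt
      (sum_lt_sum_transferOne hG hij hi hle)
  · exact (hmax (transferOne_mem_compositionsGE ht hij.symm hj)).not_gt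
      (sum_lt_sum_transferOne hG hij.symm hj hle)

lemma exists_eq_sub_and_forall_ne_eq_of_isMaxOn [Nonempty ι]
    (hG : StrictMonoOn (fun u ↦ G (u + 1) - G u) (Ici q)) (ht : t ∈ compositionsGE ι q θ)
    (hmax : IsMaxOn (fun t ↦ ∑ i, G (t i)) (compositionsGE ι q θ) t) :
    ∃ j, t j = θ - (Fintype.card ι - 1) * q ∧ ∀ i, i ≠ j → t i = q := by
  obtain ⟨j, hj⟩ : ∃ j, ∀ i, i ≠ j → t i = q := by
    by_cases hall : ∀ i, t i = q
    · exact ⟨Classical.arbitrary ι, fun i _ ↦ hall i⟩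
    · obtain ⟨j, hj⟩ := not_forall.1 hall
      exact ⟨j, fun i hij ↦ (eq_or_eq_of_isMaxOn hG ht hmax hij).resolve_right hj⟩
  exact ⟨j, eq_sub_of_forall_ne_eq ht.2 hj, hj⟩

end Compositions

theorem stmt_12_general (β : ℝ) (hβ : 1 < β) (q m θ : ℕ) (hq : 2 ≤ q) (hm : 2 ≤ m)
    (s : Fin m → ℕ) (hs : ∀ i, q ≤ s i) (hsum : ∑ i, s i = θ) :
    ((∀ s' : Fin m → ℕ, (∀ i, q ≤ s' i) → (∑ i, s' i = θ) →
        ∑ i, ((balancedProd q (s' i) : ℝ)) ^ β ≤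
          ∑ i, ((balancedProd q (s i) : ℝ)) ^ β)
      ↔ ∃ j : Fin m, s j = θ - (m - 1) * q ∧ ∀ i, i ≠ j → s i = q) := by
  set G : ℕ → ℝ := fun n ↦ (balancedProd q n : ℝ) ^ β
  have hG : StrictMonoOn (fun u ↦ G (u + 1) - G u) (Ici q) :=
    strictMonoOn_rpow_balancedProd_succ_sub hβ (by omega)
  have : Nonempty (Fin m) := ⟨⟨0, by omega⟩⟩
  have hsC : s ∈ compositionsGE (Fin m) q θ := ⟨hs, hsum⟩
  constructor
  · intro hmax
    simpa using exists_eq_sub_and_forall_ne_eq_of_isMaxOn hG hsC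
      (isMaxOn_iff.2 fun t ht ↦ hmax t ht.1 ht.2)
  · rintro ⟨j, hj, hs_eq⟩ t ht htsum
    obtain ⟨tmax, htmax, hmax⟩ :=
      Set.exists_max_image _ (fun t ↦ ∑ i, G (t i)) compositionsGE_finite ⟨s, hsC⟩
    obtain ⟨j', hj', htmax_eq⟩ :=
      exists_eq_sub_and_forall_ne_eq_of_isMaxOn hG htmax (isMaxOn_iff.2 hmax)
    calc ∑ i, G (t i) ≤ ∑ i, G (tmax i) := hmax t ⟨ht, htsum⟩
      _ = ∑ i, G (s i) := by
        rw [sum_comp_eq_of_forall_ne_eq G htmax_eq, sum_comp_eq_of_forall_ne_eq G hs_eq, hj, hj',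
          Fintype.card_fin]

theorem stmt_12 (β : ℝ) (hβ : 1 < β) (q m θ : ℕ) (hq : 2 ≤ q) (hm : 2 ≤ m)
    (hθ : m * q ≤ θ)
    (s : Fin m → ℕ) (hs : ∀ i, q ≤ s i) (hsum : ∑ i, s i = θ) :
    ((∀ s' : Fin m → ℕ, (∀ i, q ≤ s' i) → (∑ i, s' i = θ) →
        ∑ i, ((balancedProd q (s' i) : ℝ)) ^ β ≤
          ∑ i, ((balancedProd q (s i) : ℝ)) ^ β)
      ↔ ∃ j : Fin m, s j = θ - (m - 1) * q ∧ ∀ i, i ≠ j → s i = q) :=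
  stmt_12_general β hβ q m θ hq hm s hs hsum
end

section
/- Let β > 1 be real, q ≥ 2 an integer, and let g_q be the balanced product function. If s_1, s_2 are integers with q + 1 ≤ s_1 ≤ s_2, then g_q(s_1 - 1)^β + g_q(s_2 + 1)^β > g_q(s_1)^β + g_q(s_2)^β. -/
lemma bp_step (q s : ℕ) (hq : 1 ≤ q) (hs : q ≤ s) :
    (s / q) * balancedProd q (s + 1) = (s / q + 1) * balancedProd q s := by
  have hq0 : 0 < q := hq
  have hl : s % q < q := Nat.mod_lt _ hq0
  have hdm : q * (s / q) + s % q = s := Nat.div_add_mod s q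
  set a := s / q with ha
  set l := s % q with hl'
  rcases lt_or_eq_of_le (Nat.succ_le_of_lt hl) with h | h
  · -- l + 1 < q
    have hd : (s + 1) / q = a := by
      rw [show s + 1 = (l + 1) + q * a from by omega, Nat.add_mul_div_left _ _ hq0,
        Nat.div_eq_of_lt h, Nat.zero_add]
    have hm : (s + 1) % q = l + 1 := by
      rw [show s + 1 = (l + 1) + q * a from by omega, Nat.add_mul_mod_self_left,
        Nat.mod_eq_of_lt h]
    unfold balancedProd
    rw [hd, hm, ← ha, ← hl', show q - l = (q - (l + 1)) + 1 from by omega, pow_succ]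
    ring
  · -- l + 1 = q
    have hqa : q * (a + 1) = q * a + q := by ring
    have hd : (s + 1) / q = a + 1 := by
      rw [show s + 1 = q * (a + 1) from by omega, Nat.mul_div_cancel_left _ hq0]
    have hm : (s + 1) % q = 0 := by
      rw [show s + 1 = q * (a + 1) from by omega, Nat.mul_mod_right]
    unfold balancedProd
    rw [hd, hm, ← ha, ← hl', show q - l = 1 from by omega, pow_zero, Nat.sub_zero,
      show q = l + 1 from h.symm, pow_succ]
    ring

lemma bp_one_le (q s : ℕ) (hq : 1 ≤ q) (hs : q ≤ s) : 1 ≤ balancedProd q s := by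
  have ha : 1 ≤ s / q := (Nat.one_le_div_iff hq).2 hs
  unfold balancedProd
  exact Nat.one_le_iff_ne_zero.2 (Nat.mul_ne_zero (by positivity) (by positivity))

lemma bp_lt_succ (q s : ℕ) (hq : 1 ≤ q) (hs : q ≤ s) :
    balancedProd q s < balancedProd q (s + 1) := by
  have ha : 1 ≤ s / q := (Nat.one_le_div_iff hq).2 hs
  have h1 := bp_one_le q s hq hs
  have h2 := bp_step q s hq hs
  have : s / q * balancedProd q s < s / q * balancedProd q (s + 1) := by
    rw [h2]; nlinarith
  exact Nat.lt_of_mul_lt_mul_left this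

lemma bp_mono (q : ℕ) (hq : 1 ≤ q) : ∀ u v : ℕ, q ≤ u → u ≤ v →
    balancedProd q u ≤ balancedProd q v := by
  intro u v hu huv
  induction v, huv using Nat.le_induction with
  | base => exact le_refl _
  | succ v huv ih => exact le_trans ih (le_of_lt (bp_lt_succ q v hq (by omega)))

/-- Convexity step: `2 g(s+1) ≤ g(s) + g(s+2)` for `s ≥ q`. -/
lemma bp_convex_step (q s : ℕ) (hq : 1 ≤ q) (hs : q ≤ s) :
    2 * balancedProd q (s + 1) ≤ balancedProd q s + balancedProd q (s + 2) := by
  have ha : 1 ≤ s / q := (Nat.one_le_div_iff hq).2 hs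
  have ha' : s / q ≤ (s + 1) / q := Nat.div_le_div_right (by omega)
  have ha'' : (s + 1) / q ≤ s / q + 1 := by
    calc (s + 1) / q ≤ (s + q) / q := Nat.div_le_div_right (by omega)
    _ = s / q + 1 := Nat.add_div_right _ hq
  have e1 := bp_step q s hq hs
  have e2 := bp_step q (s + 1) hq (by omega)
  set a := s / q
  set a' := (s + 1) / q
  set A := balancedProd q s
  set B := balancedProd q (s + 1)
  set C := balancedProd q (s + 2)
  -- e1 : a * B = (a+1) * A, e2 : a' * C = (a'+1) * B
  have key : a * a' * (2 * B) ≤ a * a' * (A + C) := by nlinarith [e1, e2]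
  exact Nat.le_of_mul_le_mul_left key (Nat.mul_pos (by omega) (by omega))

/-- Monotonicity of differences, stated additively. -/
lemma bp_delta_mono (q : ℕ) (hq : 1 ≤ q) :
    ∀ s t : ℕ, q ≤ s → s ≤ t →
      balancedProd q (s + 1) + balancedProd q t ≤
        balancedProd q (t + 1) + balancedProd q s := by
  intro s t hs hst
  induction t, hst using Nat.le_induction with
  | base => omega
  | succ t hst ih =>
    have hc := bp_convex_step q t hq (le_trans hs hst)
    have hr : balancedProd q (t + 1 + 1) = balancedProd q (t + 2) := rfl
    omega

/-- Key real inequality from strict convexity of `x ^ β`. -/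
lemma rpow_diff_lt (β : ℝ) (hβ : 1 < β) (A B C D : ℝ) (hA : 0 < A)
    (hAB : A < B) (hBC : B ≤ C) (hCD : C < D) (hlen : B - A ≤ D - C) :
    B ^ β - A ^ β < D ^ β - C ^ β := by
  have hconv := strictConvexOn_rpow hβ
  have hAmem : A ∈ Set.Ici (0 : ℝ) := le_of_lt hA
  have hDmem : D ∈ Set.Ici (0 : ℝ) := by
    have : (0:ℝ) < D := by linarith
    exact le_of_lt this
  have hC0 : 0 < C := by linarith
  have hslope : (B ^ β - A ^ β) / (B - A) < (D ^ β - C ^ β) / (D - C) := by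
    rcases eq_or_lt_of_le hBC with h | h
    · subst h
      exact hconv.slope_strict_mono_adjacent hAmem hDmem hAB hCD
    · have h1 := hconv.slope_strict_mono_adjacent hAmem (le_of_lt hC0 : C ∈ Set.Ici (0:ℝ)) hAB h
      have h2 := hconv.slope_strict_mono_adjacent (le_of_lt (by linarith : (0:ℝ) < B)) hDmem h hCD
      linarith
  have hBA : 0 < B - A := by linarith
  have hDC : 0 < D - C := by linarith
  have hpos : 0 < (D ^ β - C ^ β) / (D - C) := by
    have : C ^ β < D ^ β := Real.rpow_lt_rpow (le_of_lt hC0) hCD (by linarith)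
    exact div_pos (by linarith) hDC
  calc B ^ β - A ^ β = ((B ^ β - A ^ β) / (B - A)) * (B - A) := by field_simp
    _ < ((D ^ β - C ^ β) / (D - C)) * (B - A) := by
        apply mul_lt_mul_of_pos_right hslope hBA
    _ ≤ ((D ^ β - C ^ β) / (D - C)) * (D - C) := by
        apply mul_le_mul_of_nonneg_left hlen (le_of_lt hpos)
    _ = D ^ β - C ^ β := by field_simp

theorem stmt_13 (β : ℝ) (hβ : 1 < β) (q : ℕ) (hq : 2 ≤ q)
    (s1 s2 : ℕ) (h1 : q + 1 ≤ s1) (h12 : s1 ≤ s2) :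
    ((balancedProd q (s1 - 1) : ℝ)) ^ β + ((balancedProd q (s2 + 1) : ℝ)) ^ β >
      ((balancedProd q s1 : ℝ)) ^ β + ((balancedProd q s2 : ℝ)) ^ β := by
  have hq1 : 1 ≤ q := by omega
  obtain ⟨s, rfl⟩ : ∃ s, s1 = s + 1 := ⟨s1 - 1, by omega⟩
  have hqs : q ≤ s := by omega
  have hss : s + 1 - 1 = s := by omega
  rw [hss]
  have hA1 : 1 ≤ balancedProd q s := bp_one_le q s hq1 hqs
  have hAB : balancedProd q s < balancedProd q (s + 1) := bp_lt_succ q s hq1 hqs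
  have hCD : balancedProd q s2 < balancedProd q (s2 + 1) := bp_lt_succ q s2 hq1 (by omega)
  have hBC : balancedProd q (s + 1) ≤ balancedProd q s2 := bp_mono q hq1 _ _ (by omega) (by omega)
  have hlen : balancedProd q (s + 1) + balancedProd q s2 ≤
      balancedProd q (s2 + 1) + balancedProd q s :=
    bp_delta_mono q hq1 s s2 hqs (by omega)
  have key := rpow_diff_lt β hβ (balancedProd q s : ℝ) (balancedProd q (s + 1) : ℝ)
    (balancedProd q s2 : ℝ) (balancedProd q (s2 + 1) : ℝ)
    (by exact_mod_cast hA1) (by exact_mod_cast hAB) (by exact_mod_cast hBC)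
    (by exact_mod_cast hCD) (by have h := (Nat.cast_le (α := ℝ)).2 hlen; push_cast at h; linarith)
  linarith
end
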